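/- Let q(x,ξ) be a positive definite quadratic form on ℝ^{2m}, q(x,ξ) = (1/2)⟨Q(x,ξ),(x,ξ)⟩ with Q symmetric positive definite. Then there exist 0 < r₁ ≤ r₂ ≤ ... ≤ r_m < ∞ and a linear symplectic transformation T such that q(T(x,ξ)) = Σ_{j=1}^m r_j^{-2}(x_j² + ξ_j²). Moreover the numbers r_j are uniquely determined. -/

import Mathlib

/-!
Choose `R` with `Rᵀ Q R = 1`. Then `A = Rᵀ J R` is skew-symmetric and nondegenerate, so `I • A` is
Hermitian with nonzero eigenvalues. As `(I • A)ᵀ = -(I • A)`, eigenvectors `w, w'` for positive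
eigenvalues satisfy `w ⬝ᵥ w' = 0`, so the real and imaginary parts of orthonormal such eigenvectors
are orthonormal in `ℝ^{2m}`. Applied to `A` and `-A`, this leaves room for at most `m` positive and
at most `m` negative eigenvalues, so exactly `m` eigenvalues `μ_j` are positive, and in the
orthonormal basis `O` of their eigenvectors' real and imaginary parts, `A` becomes
`J * diag(μ, μ)`. Hence `T = R O diag(μ, μ)^(-1/2)` is symplectic and `Tᵀ Q T = diag(μ, μ)⁻¹`,
that is `r_j = √(2 μ_j)`.

For uniqueness: if `T` is symplectic then `det (t • J - Q) = det (t • J - Tᵀ Q T)`, and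
`det (t • J - diag(d, d))² = ∏ (t² + d_j²)²`. This identity in `t` determines the multiset of the
`d_j`, and a monotone `r` is determined by its multiset of values.
-/

open Matrix Polynomial Finset Complex

namespace Matrix

variable {l R : Type*} [Fintype l] [DecidableEq l] [CommRing R]

theorem J_mul_diagonal_sumElim (d : l → R) :
    J l R * diagonal (Sum.elim d d) = diagonal (Sum.elim d d) * J l R := by
  simp [J, ← fromBlocks_diagonal, fromBlocks_multiply]

theorem det_transpose_mul_mul_of_mem_symplecticGroup {T : Matrix (l ⊕ l) (l ⊕ l) R}
    (hT : T ∈ symplecticGroup l R) (M : Matrix (l ⊕ l) (l ⊕ l) R) :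
    (Tᵀ * M * T).det = M.det := by
  rw [det_mul, det_mul, det_transpose, SymplecticGroup.det_eq_one hT, one_mul, mul_one]

theorem det_smul_J_sub_diagonal_sq (t : R) (d : l → R) :
    (t • J l R - diagonal (Sum.elim d d)).det ^ 2 = (∏ j, (t ^ 2 + d j ^ 2)) ^ 2 := by
  have hgram : (t • J l R - diagonal (Sum.elim d d))ᵀ * (t • J l R - diagonal (Sum.elim d d))
      = diagonal (Sum.elim (fun j => t ^ 2 + d j ^ 2) (fun j => t ^ 2 + d j ^ 2)) := by
    rw [transpose_sub, transpose_smul, J_transpose, diagonal_transpose, sub_mul, mul_sub, mul_sub,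
      smul_neg, neg_mul, neg_mul, smul_mul_smul, J_squared, smul_mul, mul_smul,
      J_mul_diagonal_sumElim, diagonal_mul_diagonal]
    ext i j
    rcases i with i | i <;> rcases j with j | j <;> by_cases h : i = j <;> simp [h, sq] <;> ring
  have := congrArg det hgram
  rw [det_mul, det_transpose, det_diagonal, Fintype.prod_sum_type] at this
  simpa [sq] using this

end Matrix

section QuadraticForms

theorem Matrix.IsSymm.ext_of_dotProduct_mulVec {n R : Type*} [Fintype n] [DecidableEq n]
    [CommRing R] [NoZeroDivisors R] [CharZero R] {M N : Matrix n n R} (hM : M.IsSymm)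
    (hN : N.IsSymm) (h : ∀ v, M *ᵥ v ⬝ᵥ v = N *ᵥ v ⬝ᵥ v) : M = N := by
  have hquad : ∀ (P : Matrix n n R) (i j : n), P *ᵥ (Pi.single i 1 + Pi.single j 1) ⬝ᵥ
      (Pi.single i 1 + Pi.single j 1) = P i i + P i j + P j i + P j j := by
    intro P i j
    simp only [mulVec_add, mulVec_single, MulOpposite.op_one, one_smul, dotProduct_add,
      dotProduct_single, Pi.add_apply, col_apply, mul_one]
    ring
  have hdiag : ∀ i, M i i = N i i := fun i => by
    simpa [mulVec_single, dotProduct_single] using h (Pi.single i 1)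
  ext i j
  have hpolar := h (Pi.single i 1 + Pi.single j 1)
  rw [hquad, hquad, hdiag i, hdiag j, hM.apply i j, hN.apply i j] at hpolar
  have : (2 : R) * (M i j - N i j) = 0 := by linear_combination hpolar
  exact sub_eq_zero.mp ((mul_eq_zero.mp this).resolve_left two_ne_zero)

theorem Matrix.transpose_mul_mul_mulVec_dotProduct {m n R : Type*} [Fintype m] [Fintype n]
    [CommSemiring R] (Q : Matrix m m R) (T : Matrix m n R) (v : n → R) :
    (Tᵀ * Q * T) *ᵥ v ⬝ᵥ v = Q *ᵥ (T *ᵥ v) ⬝ᵥ T *ᵥ v := by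
  rw [← mulVec_mulVec, ← mulVec_mulVec, mulVec_transpose, dotProduct_comm, dotProduct_mulVec,
    dotProduct_comm]

variable {l : Type*} [Fintype l] [DecidableEq l]

theorem Matrix.diagonal_sumElim_mulVec_dotProduct {R : Type*} [CommSemiring R] (d : l → R)
    (v : l ⊕ l → R) :
    diagonal (Sum.elim d d) *ᵥ v ⬝ᵥ v = ∑ j, d j * (v (Sum.inl j) ^ 2 + v (Sum.inr j) ^ 2) := by
  simp only [dotProduct, mulVec_diagonal, Fintype.sum_sum_type, Sum.elim_inl, Sum.elim_inr,
    ← Finset.sum_add_distrib]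
  exact Finset.sum_congr rfl fun j _ => by ring

theorem Matrix.half_dotProduct_mulVec_eq_sum_iff {Q T : Matrix (l ⊕ l) (l ⊕ l) ℝ}
    (hQ : Q.IsSymm) (c : l → ℝ) :
    (∀ v, (1 / 2) * (Q *ᵥ (T *ᵥ v) ⬝ᵥ T *ᵥ v)
        = ∑ j, c j * (v (Sum.inl j) ^ 2 + v (Sum.inr j) ^ 2)) ↔
      Tᵀ * Q * T = diagonal (Sum.elim (fun j => 2 * c j) (fun j => 2 * c j)) := by
  simp only [← transpose_mul_mul_mulVec_dotProduct]
  constructor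
  · intro h
    refine IsSymm.ext_of_dotProduct_mulVec ?_ (isSymm_diagonal _) fun v => ?_
    · rw [IsSymm, transpose_mul, transpose_mul, transpose_transpose, hQ.eq, Matrix.mul_assoc]
    · simp only [diagonal_sumElim_mulVec_dotProduct, mul_assoc, ← Finset.mul_sum, ← h v]
      ring
  · intro h v
    rw [h, diagonal_sumElim_mulVec_dotProduct, Finset.mul_sum]
    exact Finset.sum_congr rfl fun j _ => by ring

end QuadraticForms

section Uniqueness

theorem Multiset.map_univ_eq_of_forall_prod_add_eq {ι : Type*} [Fintype ι] {a a' : ι → ℝ}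
    (h : ∀ t : ℝ, 0 ≤ t → ∏ j, (t + a j) = ∏ j, (t + a' j)) :
    univ.val.map a = univ.val.map a' := by
  have hroots : ∀ b : ι → ℝ, (∏ j, (X + C (b j))).roots = (univ.val.map b).map Neg.neg := by
    intro b
    simpa [Multiset.map_map, sub_eq_add_neg] using
      roots_multiset_prod_X_sub_C (univ.val.map (-b))
  have hP : ∏ j, (X + C (a j)) = ∏ j, (X + C (a' j)) :=
    eq_of_infinite_eval_eq _ _ <| (Set.Ici_infinite 0).mono fun t ht => by
      simpa [eval_prod] using h t ht
  have := congrArg roots hP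
  rwa [hroots, hroots, (Multiset.map_injective neg_injective).eq_iff] at this

theorem Monotone.eq_of_map_univ_eq {α : Type*} [LinearOrder α] {m : ℕ} {r r' : Fin m → α}
    (hr : Monotone r) (hr' : Monotone r') (h : univ.val.map r = univ.val.map r') : r = r' := by
  rw [Fin.univ_val_map, Fin.univ_val_map, Multiset.coe_eq_coe] at h
  exact List.ofFn_injective (h.eq_of_sortedLE hr.sortedLE_ofFn hr'.sortedLE_ofFn)

theorem Matrix.map_univ_sq_eq_of_symplectic_congr_diagonal {l : Type*} [Fintype l]
    [DecidableEq l] {Q T T' : Matrix (l ⊕ l) (l ⊕ l) ℝ} {d d' : l → ℝ}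
    (hT : T ∈ symplecticGroup l ℝ) (hT' : T' ∈ symplecticGroup l ℝ)
    (hd : Tᵀ * Q * T = diagonal (Sum.elim d d))
    (hd' : T'ᵀ * Q * T' = diagonal (Sum.elim d' d')) :
    univ.val.map (fun j => d j ^ 2) = univ.val.map (fun j => d' j ^ 2) := by
  have hdet : ∀ (T : Matrix (l ⊕ l) (l ⊕ l) ℝ) (d : l → ℝ), T ∈ symplecticGroup l ℝ →
      Tᵀ * Q * T = diagonal (Sum.elim d d) → ∀ s : ℝ,
        (s • J l ℝ - Q).det ^ 2 = (∏ j, (s ^ 2 + d j ^ 2)) ^ 2 := by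
    intro T d hT hd s
    rw [← det_smul_J_sub_diagonal_sq, ← hd, ← det_transpose_mul_mul_of_mem_symplecticGroup hT,
      Matrix.mul_sub, Matrix.sub_mul, Matrix.mul_smul, Matrix.smul_mul,
      SymplecticGroup.mem_iff'.mp hT]
  refine Multiset.map_univ_eq_of_forall_prod_add_eq fun t ht => ?_
  have hsq := (hdet T d hT hd √t).symm.trans (hdet T' d' hT' hd' √t)
  rw [Real.sq_sqrt ht] at hsq
  exact (sq_eq_sq₀ (by positivity) (by positivity)).mp hsq

theorem Matrix.eq_of_symplectic_congr_diagonal {m : ℕ}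
    {Q T T' : Matrix (Fin m ⊕ Fin m) (Fin m ⊕ Fin m) ℝ} {r r' : Fin m → ℝ}
    (hr : ∀ j, 0 < r j) (hr' : ∀ j, 0 < r' j) (hmono : Monotone r) (hmono' : Monotone r')
    (hT : T ∈ symplecticGroup (Fin m) ℝ) (hT' : T' ∈ symplecticGroup (Fin m) ℝ)
    (hd : Tᵀ * Q * T =
      diagonal (Sum.elim (fun j => 2 * (r j ^ 2)⁻¹) (fun j => 2 * (r j ^ 2)⁻¹)))
    (hd' : T'ᵀ * Q * T' =
      diagonal (Sum.elim (fun j => 2 * (r' j ^ 2)⁻¹) (fun j => 2 * (r' j ^ 2)⁻¹))) :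
    r = r' := by
  have hmap := congrArg (Multiset.map fun x => √(2 / √x))
    (map_univ_sq_eq_of_symplectic_congr_diagonal hT hT' hd hd')
  have hinv : ∀ s : Fin m → ℝ, (∀ j, 0 < s j) →
      ((fun x => √(2 / √x)) ∘ fun j => (2 * (s j ^ 2)⁻¹) ^ 2) = s := by
    intro s hs
    funext j
    have := hs j
    rw [Function.comp_apply, Real.sqrt_sq (by positivity), div_mul_cancel_left₀ two_ne_zero,
      inv_inv, Real.sqrt_sq this.le]
  rw [Multiset.map_map, Multiset.map_map, hinv r hr, hinv r' hr'] at hmap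
  exact hmono.eq_of_map_univ_eq hmono' hmap

end Uniqueness

section Realification

theorem Matrix.isHermitian_I_smul_map_ofReal {n : Type*} {A : Matrix n n ℝ} (hA : Aᵀ = -A) :
    (I • A.map ofReal).IsHermitian := by
  ext i j
  have := congrFun (congrFun hA j) i
  simp only [transpose_apply, neg_apply] at this
  simp [this]

variable {n : Type*} [Fintype n]

theorem Complex.re_star_dotProduct (x y : n → ℂ) :
    (star x ⬝ᵥ y).re = (re ∘ x) ⬝ᵥ (re ∘ y) + (im ∘ x) ⬝ᵥ (im ∘ y) := by
  simp only [dotProduct, re_sum, ← Finset.sum_add_distrib]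
  exact Finset.sum_congr rfl fun i _ => by simp [mul_re]

theorem Complex.im_star_dotProduct (x y : n → ℂ) :
    (star x ⬝ᵥ y).im = (re ∘ x) ⬝ᵥ (im ∘ y) - (im ∘ x) ⬝ᵥ (re ∘ y) := by
  simp only [dotProduct, im_sum, ← Finset.sum_sub_distrib]
  exact Finset.sum_congr rfl fun i _ => by simp [mul_im]; ring

theorem Complex.re_dotProduct (x y : n → ℂ) :
    (x ⬝ᵥ y).re = (re ∘ x) ⬝ᵥ (re ∘ y) - (im ∘ x) ⬝ᵥ (im ∘ y) := by
  simp only [dotProduct, re_sum, ← Finset.sum_sub_distrib]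
  exact Finset.sum_congr rfl fun i _ => by simp [mul_re]

theorem Complex.im_dotProduct (x y : n → ℂ) :
    (x ⬝ᵥ y).im = (re ∘ x) ⬝ᵥ (im ∘ y) + (im ∘ x) ⬝ᵥ (re ∘ y) := by
  simp only [dotProduct, im_sum, ← Finset.sum_add_distrib]
  exact Finset.sum_congr rfl fun i _ => by simp [mul_im]

theorem Matrix.re_map_ofReal_mulVec (A : Matrix n n ℝ) (x : n → ℂ) :
    re ∘ (A.map ofReal *ᵥ x) = A *ᵥ (re ∘ x) := by
  funext i
  simp [mulVec, dotProduct, re_sum]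

theorem Matrix.im_map_ofReal_mulVec (A : Matrix n n ℝ) (x : n → ℂ) :
    im ∘ (A.map ofReal *ᵥ x) = A *ᵥ (im ∘ x) := by
  funext i
  simp [mulVec, dotProduct, im_sum]

theorem Matrix.mulVec_re_im_of_I_smul_mulVec_eq {A : Matrix n n ℝ} {w : n → ℂ} {μ : ℝ}
    (hw : (I • A.map ofReal) *ᵥ w = μ • w) :
    A *ᵥ (re ∘ w) = μ • (im ∘ w) ∧ A *ᵥ (im ∘ w) = -μ • (re ∘ w) := by
  rw [smul_mulVec] at hw
  constructor
  · rw [← re_map_ofReal_mulVec]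
    funext i
    simpa using congrArg im (congrFun hw i)
  · rw [← im_map_ofReal_mulVec]
    funext i
    simpa [neg_eq_iff_eq_neg] using congrArg re (congrFun hw i)

theorem Matrix.dotProduct_eq_zero_of_transpose_eq_neg {K : Type*} [CommRing K]
    [NoZeroDivisors K] {M : Matrix n n K} (hM : Mᵀ = -M) {v w : n → K} {a b : K}
    (hv : M *ᵥ v = a • v) (hw : M *ᵥ w = b • w) (hab : a + b ≠ 0) : v ⬝ᵥ w = 0 := by
  have h : b * (v ⬝ᵥ w) = -a * (v ⬝ᵥ w) := by
    rw [← smul_eq_mul, ← dotProduct_smul, ← hw, dotProduct_mulVec, ← mulVec_transpose, hM,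
      neg_mulVec, hv, neg_dotProduct, smul_dotProduct, smul_eq_mul, neg_mul]
  have : (a + b) * (v ⬝ᵥ w) = 0 := by linear_combination h
  exact (mul_eq_zero.mp this).resolve_left hab

end Realification

section Frame

variable {n ι : Type*} [Fintype n]

/-- The factor `√2` makes the frame orthonormal when `w` is orthonormal and isotropic
(`reImFrame_dotProduct`). -/
noncomputable def reImFrame (w : ι → n → ℂ) : ι ⊕ ι → n → ℝ :=
  Sum.elim (fun i => √2 • (re ∘ w i)) (fun i => √2 • (im ∘ w i))

variable [DecidableEq ι]

theorem reImFrame_dotProduct {w : ι → n → ℂ}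
    (hstar : ∀ i j, star (w i) ⬝ᵥ w j = if i = j then 1 else 0)
    (hzero : ∀ i j, w i ⬝ᵥ w j = 0) (α β : ι ⊕ ι) :
    reImFrame w α ⬝ᵥ reImFrame w β = if α = β then 1 else 0 := by
  have h2 : √2 * √2 = 2 := Real.mul_self_sqrt zero_le_two
  rcases α with i | i <;> rcases β with j | j <;>
  · have e1 := re_star_dotProduct (w i) (w j)
    have e2 := im_star_dotProduct (w i) (w j)
    have e3 := re_dotProduct (w i) (w j)
    have e4 := im_dotProduct (w i) (w j)
    rw [hstar] at e1 e2
    rw [hzero, zero_re] at e3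
    rw [hzero, zero_im] at e4
    by_cases h : i = j <;>
      simp only [h, if_true, if_false, one_re, one_im, zero_re, zero_im, reImFrame, Sum.elim_inl,
        Sum.elim_inr, smul_dotProduct, dotProduct_smul, smul_eq_mul, ← mul_assoc, h2,
        Sum.inl.injEq, Sum.inr.injEq, reduceCtorEq] at e1 e2 e3 e4 ⊢ <;>
      linarith

theorem Matrix.mul_transpose_of_orthonormal {u : ι → n → ℝ}
    (hu : ∀ α β, u α ⬝ᵥ u β = if α = β then 1 else 0) : of u * (of u)ᵀ = 1 := by
  ext α β
  rw [mul_apply', one_apply]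
  exact hu α β

variable [Fintype ι]

theorem Fintype.card_le_of_orthonormal {u : ι → n → ℝ}
    (hu : ∀ α β, u α ⬝ᵥ u β = if α = β then 1 else 0) : Fintype.card ι ≤ Fintype.card n :=
  calc Fintype.card ι = (of u * (of u)ᵀ).rank := by
        rw [mul_transpose_of_orthonormal hu, rank_one]
    _ ≤ (of u).rank := rank_mul_le_left _ _
    _ ≤ Fintype.card n := rank_le_card_width _

theorem Matrix.mul_mul_transpose_eq_J_mul_diagonal {u : ι ⊕ ι → n → ℝ}
    (hu : ∀ α β, u α ⬝ᵥ u β = if α = β then 1 else 0) {A : Matrix n n ℝ} {μ : ι → ℝ}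
    (hinl : ∀ i, A *ᵥ u (Sum.inl i) = μ i • u (Sum.inr i))
    (hinr : ∀ i, A *ᵥ u (Sum.inr i) = -μ i • u (Sum.inl i)) :
    of u * A * (of u)ᵀ = J ι ℝ * diagonal (Sum.elim μ μ) := by
  ext α β
  rw [Matrix.mul_assoc, mul_apply', mul_diagonal]
  change u α ⬝ᵥ (A *ᵥ u β) = _
  rcases β with j | j
  · rw [hinl, dotProduct_smul, hu]
    rcases α with i | i <;> by_cases h : i = j <;> simp [J, h]
  · rw [hinr, dotProduct_smul, hu]
    rcases α with i | i <;> by_cases h : i = j <;> simp [J, h]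

end Frame

section Eigenvectors

variable {n ι : Type*} [Fintype n] {A : Matrix n n ℝ} {w : ι → n → ℂ} {μ : ι → ℝ}

theorem reImFrame_dotProduct_of_eigenvectors [DecidableEq ι] (hA : Aᵀ = -A)
    (hμ : ∀ i, 0 < μ i) (hw : ∀ i, (I • A.map ofReal) *ᵥ w i = μ i • w i)
    (horth : ∀ i j, star (w i) ⬝ᵥ w j = if i = j then 1 else 0) (α β : ι ⊕ ι) :
    reImFrame w α ⬝ᵥ reImFrame w β = if α = β then 1 else 0 := by
  have hskew : (I • A.map ofReal)ᵀ = -(I • A.map ofReal) := by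
    rw [transpose_smul, ← transpose_map, hA, Matrix.map_neg _ ofReal_neg, smul_neg]
  refine reImFrame_dotProduct horth (fun i j => ?_) α β
  refine dotProduct_eq_zero_of_transpose_eq_neg hskew (a := μ i) (b := μ j) ?_ ?_ ?_
  · exact (hw i).trans (RCLike.real_smul_eq_coe_smul _ _)
  · exact (hw j).trans (RCLike.real_smul_eq_coe_smul _ _)
  · exact_mod_cast (add_pos (hμ i) (hμ j)).ne'

theorem mulVec_reImFrame_inl (hw : ∀ i, (I • A.map ofReal) *ᵥ w i = μ i • w i) (i : ι) :
    A *ᵥ reImFrame w (Sum.inl i) = μ i • reImFrame w (Sum.inr i) := by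
  simp only [reImFrame, Sum.elim_inl, Sum.elim_inr, mulVec_smul,
    (mulVec_re_im_of_I_smul_mulVec_eq (hw i)).1, smul_comm (√2) (μ i)]

theorem mulVec_reImFrame_inr (hw : ∀ i, (I • A.map ofReal) *ᵥ w i = μ i • w i) (i : ι) :
    A *ᵥ reImFrame w (Sum.inr i) = -μ i • reImFrame w (Sum.inl i) := by
  simp only [reImFrame, Sum.elim_inl, Sum.elim_inr, mulVec_smul,
    (mulVec_re_im_of_I_smul_mulVec_eq (hw i)).2, smul_comm (√2) (-μ i)]

theorem two_mul_card_le_of_eigenvectors [Fintype ι] [DecidableEq ι] (hA : Aᵀ = -A)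
    (hμ : ∀ i, 0 < μ i) (hw : ∀ i, (I • A.map ofReal) *ᵥ w i = μ i • w i)
    (horth : ∀ i j, star (w i) ⬝ᵥ w j = if i = j then 1 else 0) :
    2 * Fintype.card ι ≤ Fintype.card n := by
  simpa [two_mul] using
    Fintype.card_le_of_orthonormal (reImFrame_dotProduct_of_eigenvectors hA hμ hw horth)

end Eigenvectors

theorem Matrix.IsHermitian.star_eigenvectorBasis_dotProduct {𝕜 n : Type*} [RCLike 𝕜]
    [Fintype n] [DecidableEq n] {H : Matrix n n 𝕜} (hH : H.IsHermitian) (i j : n) :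
    star ⇑(hH.eigenvectorBasis i) ⬝ᵥ ⇑(hH.eigenvectorBasis j) = if i = j then 1 else 0 := by
  rw [dotProduct_comm, ← EuclideanSpace.inner_eq_star_dotProduct]
  exact orthonormal_iff_ite.mp hH.eigenvectorBasis.orthonormal i j

theorem Matrix.two_mul_card_filter_pos_eigenvalues {n : Type*} [Fintype n] [DecidableEq n]
    {A : Matrix n n ℝ} (hA : Aᵀ = -A) (hdet : A.det ≠ 0) (hH : (I • A.map ofReal).IsHermitian) :
    2 * (univ.filter fun i => 0 < hH.eigenvalues i).card = Fintype.card n := by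
  set ev := hH.eigenvalues
  set w : n → n → ℂ := fun i => ⇑(hH.eigenvectorBasis i)
  have hw : ∀ i, (I • A.map ofReal) *ᵥ w i = ev i • w i := hH.mulVec_eigenvectorBasis
  have hw' : ∀ i, (I • (-A).map ofReal) *ᵥ w i = -ev i • w i := fun i => by
    rw [Matrix.map_neg _ ofReal_neg, smul_neg, neg_mulVec, hw, neg_smul]
  have horth : ∀ i j, star (w i) ⬝ᵥ w j = if i = j then 1 else 0 :=
    hH.star_eigenvectorBasis_dotProduct
  have hev : ∀ i, ev i ≠ 0 := by
    have hdetH : (I • A.map ofReal).det ≠ 0 := by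
      rw [det_smul, show (A.map ofReal).det = A.det from (ofRealHom.map_det A).symm]
      exact mul_ne_zero (pow_ne_zero _ I_ne_zero) (ofReal_ne_zero.mpr hdet)
    rw [hH.det_eq_prod_eigenvalues] at hdetH
    exact fun i h => hdetH (prod_eq_zero (mem_univ i) (by simp [ev, h]))
  have hpos := two_mul_card_le_of_eigenvectors (ι := {i // 0 < ev i}) hA (fun i => i.2)
    (fun i => hw i) (fun i j => by simp [horth, Subtype.ext_iff])
  have hneg := two_mul_card_le_of_eigenvectors (ι := {i // ev i < 0}) (μ := fun i => -ev i)
    (by rw [transpose_neg, hA]) (fun i => neg_pos.mpr i.2) (fun i => hw' i)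
    (fun i j => by simp [horth, Subtype.ext_iff])
  have hsplit := card_filter_add_card_filter_not (s := univ) fun i => 0 < ev i
  rw [filter_congr fun i _ => not_lt.trans (hev i).le_iff_lt, card_univ] at hsplit
  simp only [Fintype.card_subtype] at hpos hneg
  omega

theorem Finset.exists_monotone_comp_of_card_eq {n α : Type*} [LinearOrder α] (f : n → α)
    {s : Finset n} {m : ℕ} (hs : s.card = m) :
    ∃ σ : Fin m → n, Function.Injective σ ∧ (∀ j, σ j ∈ s) ∧ Monotone (f ∘ σ) := by
  let e := s.equivFinOfCardEq hs
  let g : Fin m → α := fun j => f (e.symm j)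
  refine ⟨fun j => e.symm (Tuple.sort g j), fun x y h => ?_, fun j => (e.symm _).2,
    Tuple.monotone_sort g⟩
  exact (Tuple.sort g).injective (e.symm.injective (Subtype.coe_injective h))

theorem Matrix.exists_orthogonal_transpose_mul_mul_eq_J_mul_diagonal {m : ℕ}
    {A : Matrix (Fin m ⊕ Fin m) (Fin m ⊕ Fin m) ℝ} (hA : Aᵀ = -A) (hdet : A.det ≠ 0) :
    ∃ (μ : Fin m → ℝ) (O : Matrix (Fin m ⊕ Fin m) (Fin m ⊕ Fin m) ℝ), (∀ j, 0 < μ j) ∧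
      Monotone μ ∧ Oᵀ * O = 1 ∧ Oᵀ * A * O = J (Fin m) ℝ * diagonal (Sum.elim μ μ) := by
  have hH := isHermitian_I_smul_map_ofReal hA
  have hcard : (univ.filter fun i => 0 < hH.eigenvalues i).card = m := by
    have := two_mul_card_filter_pos_eigenvalues hA hdet hH
    rw [Fintype.card_sum, Fintype.card_fin] at this
    omega
  obtain ⟨σ, hσ, hσpos, hmono⟩ := exists_monotone_comp_of_card_eq hH.eigenvalues hcard
  set w : Fin m → Fin m ⊕ Fin m → ℂ := fun j => ⇑(hH.eigenvectorBasis (σ j))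
  have hμ : ∀ j, 0 < (hH.eigenvalues ∘ σ) j := fun j => (mem_filter.mp (hσpos j)).2
  have hw : ∀ j, (I • A.map ofReal) *ᵥ w j = (hH.eigenvalues ∘ σ) j • w j :=
    fun j => hH.mulVec_eigenvectorBasis (σ j)
  have horth : ∀ i j, star (w i) ⬝ᵥ w j = if i = j then 1 else 0 := fun i j => by
    simp only [w, hH.star_eigenvectorBasis_dotProduct, hσ.eq_iff]
  have hu := reImFrame_dotProduct_of_eigenvectors hA hμ hw horth
  refine ⟨hH.eigenvalues ∘ σ, (of (reImFrame w))ᵀ, hμ, hmono, ?_, ?_⟩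
  · rw [transpose_transpose, mul_transpose_of_orthonormal hu]
  · rw [transpose_transpose,
      mul_mul_transpose_eq_J_mul_diagonal hu (mulVec_reImFrame_inl hw) (mulVec_reImFrame_inr hw)]

theorem Matrix.PosDef.exists_transpose_mul_mul_eq_one {n : Type*} [Fintype n] [DecidableEq n]
    {Q : Matrix n n ℝ} (hQ : Q.PosDef) : ∃ R : Matrix n n ℝ, Rᵀ * Q * R = 1 := by
  obtain ⟨U, ev, hU, hev, rfl⟩ : ∃ (U : Matrix n n ℝ) (ev : n → ℝ),
      Uᵀ * U = 1 ∧ (∀ i, 0 < ev i) ∧ Q = U * diagonal ev * Uᵀ := by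
    refine ⟨hQ.1.eigenvectorUnitary, _, mem_unitaryGroup_iff'.mp hQ.1.eigenvectorUnitary.2,
      hQ.eigenvalues_pos, ?_⟩
    simpa only [Unitary.conjStarAlgAut_apply, Function.comp_def, RCLike.ofReal_real_eq_id, id,
      star_eq_conjTranspose, conjTranspose_eq_transpose_of_trivial] using hQ.1.spectral_theorem
  refine ⟨U * diagonal fun i => (√(ev i))⁻¹, ?_⟩
  simp only [transpose_mul, diagonal_transpose, Matrix.mul_assoc]
  simp only [← Matrix.mul_assoc Uᵀ U, hU, Matrix.one_mul, diagonal_mul_diagonal]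
  rw [← diagonal_one]
  congr 1
  funext i
  field_simp [(Real.sqrt_pos.mpr (hev i)).ne']
  exact (Real.sq_sqrt (hev i).le).symm

theorem Matrix.PosDef.exists_symplectic_transpose_mul_mul_eq_diagonal {m : ℕ}
    {Q : Matrix (Fin m ⊕ Fin m) (Fin m ⊕ Fin m) ℝ} (hQ : Q.PosDef) :
    ∃ (μ : Fin m → ℝ) (T : Matrix (Fin m ⊕ Fin m) (Fin m ⊕ Fin m) ℝ), (∀ j, 0 < μ j) ∧
      Monotone μ ∧ T ∈ symplecticGroup (Fin m) ℝ ∧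
      Tᵀ * Q * T = diagonal (Sum.elim μ⁻¹ μ⁻¹) := by
  obtain ⟨R, hR⟩ := hQ.exists_transpose_mul_mul_eq_one
  have hdetR : R.det ≠ 0 := fun h => by simpa [h] using congrArg det hR
  obtain ⟨μ, O, hμ, hmono, hO, hOA⟩ := exists_orthogonal_transpose_mul_mul_eq_J_mul_diagonal
    (A := Rᵀ * J (Fin m) ℝ * R) (by simp [transpose_mul, J_transpose, Matrix.mul_assoc])
    (by simp [det_mul, hdetR, (isUnit_det_J (Fin m) ℝ).ne_zero])
  set c : Fin m → ℝ := fun j => (√(μ j))⁻¹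
  have hcc : ∀ j, c j * c j = (μ j)⁻¹ := fun j => by
    simp only [c, ← mul_inv, Real.mul_self_sqrt (hμ j).le]
  have hcμc : (fun i => Sum.elim c c i * Sum.elim μ μ i * Sum.elim c c i) = fun _ => 1 := by
    funext i
    rcases i with j | j <;> simp only [Sum.elim_inl, Sum.elim_inr, mul_right_comm _ (μ j), hcc,
      inv_mul_cancel₀ (hμ j).ne']
  refine ⟨μ, R * O * diagonal (Sum.elim c c), hμ, hmono, SymplecticGroup.mem_iff'.mpr ?_, ?_⟩
  · calc (R * O * diagonal (Sum.elim c c))ᵀ * J (Fin m) ℝ * (R * O * diagonal (Sum.elim c c))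
        = diagonal (Sum.elim c c) * (Oᵀ * (Rᵀ * J (Fin m) ℝ * R) * O) *
            diagonal (Sum.elim c c) := by
          simp only [transpose_mul, diagonal_transpose, Matrix.mul_assoc]
      _ = J (Fin m) ℝ * (diagonal (Sum.elim c c) * diagonal (Sum.elim μ μ) *
            diagonal (Sum.elim c c)) := by
          rw [hOA, ← Matrix.mul_assoc, ← J_mul_diagonal_sumElim]
          simp only [Matrix.mul_assoc]
      _ = J (Fin m) ℝ := by
          rw [diagonal_mul_diagonal, diagonal_mul_diagonal, hcμc, diagonal_one, Matrix.mul_one]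
  · calc (R * O * diagonal (Sum.elim c c))ᵀ * Q * (R * O * diagonal (Sum.elim c c))
        = diagonal (Sum.elim c c) * (Oᵀ * (Rᵀ * Q * R) * O) * diagonal (Sum.elim c c) := by
          simp only [transpose_mul, diagonal_transpose, Matrix.mul_assoc]
      _ = diagonal (Sum.elim μ⁻¹ μ⁻¹) := by
          rw [hR, Matrix.mul_one, hO, Matrix.mul_one, diagonal_mul_diagonal]
          congr 1
          funext i
          rcases i with j | j <;> exact hcc j

/-- Williamson's theorem: a positive definite quadratic form `q(x,ξ) = ½⟨Q(x,ξ),(x,ξ)⟩`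
on `ℝ^{2m}` can be brought by a linear symplectic transformation `T` to the normal form
`Σ_j r_j⁻²(x_j² + ξ_j²)` with `0 < r₁ ≤ ... ≤ r_m`, and the numbers `r_j` are uniquely
determined. -/
theorem williamson (m : ℕ) (Q : Matrix (Fin m ⊕ Fin m) (Fin m ⊕ Fin m) ℝ)
    (hsymm : Q.IsSymm) (hpos : Q.PosDef) :
    ∃ (r : Fin m → ℝ) (T : Matrix (Fin m ⊕ Fin m) (Fin m ⊕ Fin m) ℝ),
      (∀ j, 0 < r j) ∧ Monotone r ∧
      Tᵀ * Matrix.J (Fin m) ℝ * T = Matrix.J (Fin m) ℝ ∧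
      (∀ v : (Fin m ⊕ Fin m) → ℝ,
        (1 / 2) * (Q.mulVec (T.mulVec v) ⬝ᵥ T.mulVec v)
          = ∑ j, ((r j) ^ 2)⁻¹ * ((v (Sum.inl j)) ^ 2 + (v (Sum.inr j)) ^ 2)) ∧
      (∀ (r' : Fin m → ℝ) (T' : Matrix (Fin m ⊕ Fin m) (Fin m ⊕ Fin m) ℝ),
        (∀ j, 0 < r' j) → Monotone r' →
        T'ᵀ * Matrix.J (Fin m) ℝ * T' = Matrix.J (Fin m) ℝ →
        (∀ v : (Fin m ⊕ Fin m) → ℝ,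
          (1 / 2) * (Q.mulVec (T'.mulVec v) ⬝ᵥ T'.mulVec v)
            = ∑ j, ((r' j) ^ 2)⁻¹ * ((v (Sum.inl j)) ^ 2 + (v (Sum.inr j)) ^ 2)) →
        r' = r) := by
  obtain ⟨μ, T, hμ, hmono, hT, hQT⟩ := hpos.exists_symplectic_transpose_mul_mul_eq_diagonal
  set r : Fin m → ℝ := fun j => √(2 * μ j)
  have hrpos : ∀ j, 0 < r j := fun j => Real.sqrt_pos.mpr (by linarith [hμ j])
  have hrmono : Monotone r := fun i j hij => Real.sqrt_le_sqrt (by linarith [hmono hij])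
  have hQT' : Tᵀ * Q * T =
      diagonal (Sum.elim (fun j => 2 * (r j ^ 2)⁻¹) fun j => 2 * (r j ^ 2)⁻¹) := by
    have hr : ∀ j, 2 * (r j ^ 2)⁻¹ = (μ j)⁻¹ := fun j => by
      rw [Real.sq_sqrt (by linarith [hμ j]), mul_inv, ← mul_assoc, mul_inv_cancel₀ two_ne_zero,
        one_mul]
    simp only [hr, hQT]
    rfl
  refine ⟨r, T, hrpos, hrmono, SymplecticGroup.mem_iff'.mp hT,
    (half_dotProduct_mulVec_eq_sum_iff hsymm _).mpr hQT', fun r' T' hr' hmono' hT' hq' => ?_⟩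
  exact eq_of_symplectic_congr_diagonal hr' hrpos hmono' hrmono (SymplecticGroup.mem_iff'.mpr hT')
    hT ((half_dotProduct_mulVec_eq_sum_iff hsymm _).mp hq') hQT'
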